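/- Let p ∈ [1, ∞) with p ≠ 2 and let d ∈ ℤ_{>0}. An idempotent e in M_d(ℂ), regarded as an operator on ℓ^p_d, is hermitian (i.e., ‖exp(iλe)‖ = 1 for all λ ∈ ℝ in the operator norm on ℓ^p_d) if and only if e is a diagonal matrix with entries in {0,1}. -/

import Mathlib

/-!
Since `e` is idempotent, `exp (iλ e) = 1 + (z - 1) e` with `z = e^{iλ}`. If all these operators
have norm one they are isometries of `ℓ^p_d`, because their inverses `exp (-iλ e)` have norm one
too. Applying them to the `k`-th basis vector gives, with `a = e k k` and
`B = ∑_{j ≠ k} |e j k|^p`, the identity `|1 + (z - 1) a|^p + |z - 1|^p B = 1` on the unit circle.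
Comparing `z = i` with `z = -i` shows that `a` is real, and then, with `t = |z - 1|^2`, the identity
reads `(1 - a (1 - a) t)^{p/2} + t^{p/2} B = 1` for small `t ≥ 0`. Taking the slope at `t = 0⁺`,
`t^{p/2 - 1} B` must converge to `(p/2) a (1 - a)`; as `p/2 ≠ 1` this limit can only be `0`, so
`a (1 - a) = 0`, and then `B = 0`.
Conversely, a diagonal `e` with entries in `{0, 1}` makes `1 + (z - 1) e` diagonal with unimodular
entries, hence an isometry.
-/

open scoped ENNReal

/-- A `d × d` complex matrix, viewed as a bounded operator on `ℓ^p_d`. -/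
noncomputable def matrixLp (p : ℝ≥0∞) [Fact (1 ≤ p)] {d : ℕ}
    (M : Matrix (Fin d) (Fin d) ℂ) :
    PiLp p (fun _ : Fin d => ℂ) →L[ℂ] PiLp p (fun _ : Fin d => ℂ) :=
  LinearMap.toContinuousLinearMap
    ((WithLp.linearEquiv p ℂ (∀ _ : Fin d, ℂ)).symm.toLinearMap ∘ₗ
      M.mulVecLin ∘ₗ (WithLp.linearEquiv p ℂ (∀ _ : Fin d, ℂ)).toLinearMap)

open Filter Topology Finset Complex

theorem eq_zero_of_tendsto_rpow_mul_nhdsGT_zero {r B L : ℝ} (hr : r ≠ 0)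
    (h : Tendsto (fun t : ℝ => t ^ r * B) (𝓝[>] 0) (𝓝 L)) : L = 0 := by
  have hsmall : ∀ {s : ℝ}, 0 < s → Tendsto (fun t : ℝ => t ^ s) (𝓝[>] 0) (𝓝 0) := fun hs =>
    ((Real.continuous_rpow_const hs.le).tendsto' 0 0 (Real.zero_rpow hs.ne')).mono_left
      nhdsWithin_le_nhds
  rcases hr.lt_or_gt with hneg | hpos
  · have hB : Tendsto (fun t : ℝ => t ^ (-r) * (t ^ r * B)) (𝓝[>] 0) (𝓝 (0 * L)) :=
      (hsmall (neg_pos.mpr hneg)).mul h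
    have hB' : Tendsto (fun t : ℝ => t ^ (-r) * (t ^ r * B)) (𝓝[>] 0) (𝓝 B) := by
      refine tendsto_const_nhds.congr' ?_
      filter_upwards [self_mem_nhdsWithin] with t (ht : 0 < t)
      rw [Real.rpow_neg ht.le, inv_mul_cancel_left₀ (Real.rpow_pos_of_pos ht r).ne']
    have hB0 : B = 0 := by simpa using tendsto_nhds_unique hB' hB
    subst hB0
    simpa using tendsto_nhds_unique h (by simp)
  · simpa using tendsto_nhds_unique h ((hsmall hpos).mul_const B)

theorem eq_zero_of_one_sub_mul_rpow_add_rpow_mul_eq_one {q γ B : ℝ} (hq0 : q ≠ 0) (hq1 : q ≠ 1)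
    (H : ∀ t ∈ Set.Icc (0 : ℝ) 1, (1 - γ * t) ^ q + t ^ q * B = 1) : γ = 0 ∧ B = 0 := by
  have hderiv : HasDerivAt (fun t : ℝ => (1 - γ * t) ^ q) (-γ * q) 0 := by
    simpa using (((hasDerivAt_id (0 : ℝ)).const_mul γ).const_sub 1).rpow_const (p := q)
      (Or.inl (by simp))
  have hslope : Tendsto (fun t : ℝ => t ^ (q - 1) * -B) (𝓝[>] 0) (𝓝 (-γ * q)) := by
    refine ((hasDerivAt_iff_tendsto_slope_zero.mp hderiv).mono_left
      (nhdsGT_le_nhdsNE 0)).congr' ?_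
    filter_upwards [Ioc_mem_nhdsGT zero_lt_one] with t ⟨ht0, ht1⟩
    have := H t ⟨ht0.le, ht1⟩
    rw [Real.rpow_sub_one ht0.ne']
    simp only [zero_add, mul_zero, sub_zero, Real.one_rpow, smul_eq_mul]
    rw [show (1 - γ * t) ^ q - 1 = t ^ q * -B by linarith]
    field_simp
  have hγ : γ = 0 := by
    simpa [hq0] using eq_zero_of_tendsto_rpow_mul_nhdsGT_zero (sub_ne_zero.mpr hq1) hslope
  refine ⟨hγ, ?_⟩
  simpa [hγ] using H 1 ⟨zero_le_one, le_rfl⟩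

theorem Complex.normSq_exp_ofReal_mul_I_sub_one (l : ℝ) :
    normSq (exp (l * I) - 1) = 2 * (1 - Real.cos l) := by
  simp only [normSq_apply, sub_re, sub_im, one_re, one_im, exp_ofReal_mul_I_re,
    exp_ofReal_mul_I_im]
  linear_combination Real.sin_sq_add_cos_sq l

theorem Complex.normSq_one_add_exp_ofReal_mul_I_sub_one_mul (l : ℝ) (a : ℂ) :
    normSq (1 + (exp (l * I) - 1) * a)
      = 1 - 2 * (1 - Real.cos l) * (a.re - normSq a) - 2 * Real.sin l * a.im := by
  simp only [normSq_apply, add_re, add_im, mul_re, mul_im, sub_re, sub_im, one_re, one_im,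
    exp_ofReal_mul_I_re, exp_ofReal_mul_I_im]
  linear_combination (a.re * a.re + a.im * a.im) * Real.sin_sq_add_cos_sq l

theorem Complex.norm_rpow_eq_normSq_rpow (w : ℂ) (p : ℝ) : ‖w‖ ^ p = normSq w ^ (p / 2) := by
  rw [← Complex.sq_norm, ← Real.rpow_natCast, ← Real.rpow_mul (norm_nonneg w)]
  ring_nf

theorem eq_zero_or_eq_one_of_norm_rpow_add_eq_one {p B : ℝ} {a : ℂ} (hp0 : p ≠ 0) (hp2 : p ≠ 2)
    (H : ∀ l : ℝ, ‖1 + (exp (l * I) - 1) * a‖ ^ p + ‖exp (l * I) - 1‖ ^ p * B = 1) :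
    (a = 0 ∨ a = 1) ∧ B = 0 := by
  have hq0 : p / 2 ≠ 0 := div_ne_zero hp0 two_ne_zero
  simp_rw [norm_rpow_eq_normSq_rpow, normSq_exp_ofReal_mul_I_sub_one] at H
  have him : a.im = 0 := by
    have h := (H (Real.pi / 2)).trans (H (-(Real.pi / 2))).symm
    rw [Real.cos_neg, add_left_inj, Real.rpow_left_inj (normSq_nonneg _) (normSq_nonneg _) hq0,
      normSq_one_add_exp_ofReal_mul_I_sub_one_mul, normSq_one_add_exp_ofReal_mul_I_sub_one_mul,
      Real.cos_neg, Real.sin_neg, Real.sin_pi_div_two] at h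
    linarith
  simp_rw [normSq_one_add_exp_ofReal_mul_I_sub_one_mul, him] at H
  have hre : a.re - normSq a = 0 ∧ B = 0 := by
    refine eq_zero_of_one_sub_mul_rpow_add_rpow_mul_eq_one hq0 (by contrapose! hp2; linarith)
      fun t ⟨ht0, ht1⟩ => ?_
    have hl : 2 * (1 - Real.cos (Real.arccos (1 - t / 2))) = t := by
      rw [Real.cos_arccos (by linarith) (by linarith)]; ring
    simpa [hl, mul_comm t] using H (Real.arccos (1 - t / 2))
  refine ⟨?_, hre.2⟩
  have : a.re * (1 - a.re) = 0 := by
    linear_combination hre.1 + (by simp [normSq_apply, him] : normSq a = a.re * a.re)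
  rcases mul_eq_zero.mp this with h | h
  · exact .inl (Complex.ext h him)
  · exact .inr (Complex.ext (by simp; linarith) him)

theorem IsIdempotentElem.exp_smul {A : Type*} [NormedRing A] [NormedAlgebra ℂ A]
    [CompleteSpace A] {E : A} (hE : IsIdempotentElem E) (c : ℂ) :
    NormedSpace.exp (c • E) = 1 + (exp c - 1) • E := by
  have hscalar : HasSum (fun n : ℕ => ((n.factorial : ℂ)⁻¹ * c ^ n) • E) (exp c • E) := by
    rw [exp_eq_exp_ℂ]
    exact (NormedSpace.exp_series_hasSum_exp' (𝕂 := ℂ) c).smul_const E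
  have hterm : ∀ n : ℕ, ((n.factorial : ℂ)⁻¹) • (c • E) ^ n
      = ((n.factorial : ℂ)⁻¹ * c ^ n) • E + Pi.single (M := fun _ => A) 0 (1 - E) n := by
    rintro (_ | n)
    · simp
    · rw [smul_pow, hE.pow_succ_eq, smul_smul, Pi.single_eq_of_ne n.succ_ne_zero, add_zero]
  refine (NormedSpace.exp_series_hasSum_exp' (𝕂 := ℂ) (c • E)).unique ?_
  simp_rw [hterm]
  convert hscalar.add (hasSum_pi_single 0 (1 - E)) using 1
  module

theorem ContinuousLinearMap.norm_map_eq_of_mul_eq_one {𝕜 E : Type*} [NontriviallyNormedField 𝕜]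
    [SeminormedAddCommGroup E] [NormedSpace 𝕜 E] {U V : E →L[𝕜] E} (hVU : V * U = 1)
    (hU : ‖U‖ ≤ 1) (hV : ‖V‖ ≤ 1) (x : E) : ‖U x‖ = ‖x‖ := by
  refine le_antisymm ((U.le_of_opNorm_le hU x).trans_eq (one_mul _)) ?_
  calc ‖x‖ = ‖V (U x)‖ := by rw [← mul_apply_eq_comp, hVU, one_apply_eq_self]
    _ ≤ ‖U x‖ := (V.le_of_opNorm_le hV _).trans_eq (one_mul _)

theorem ContinuousLinearMap.norm_exp_smul_apply_eq {E : Type*} [NormedAddCommGroup E]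
    [NormedSpace ℂ E] [CompleteSpace E] {T : E →L[ℂ] E}
    (h : ∀ l : ℝ, ‖NormedSpace.exp (((l : ℂ) * I) • T)‖ = 1) (l : ℝ) (x : E) :
    ‖NormedSpace.exp (((l : ℂ) * I) • T) x‖ = ‖x‖ := by
  let +nondep : NormedAlgebra ℚ (E →L[ℂ] E) := .restrictScalars ℚ ℂ _
  have hinv : NormedSpace.exp (-(((l : ℂ) * I) • T)) * NormedSpace.exp (((l : ℂ) * I) • T) = 1 := by
    simpa using! (NormedSpace.exp_add_of_commute (Commute.refl (((l : ℂ) * I) • T)).neg_left).symm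
  exact norm_map_eq_of_mul_eq_one hinv (h l).le (by simpa [neg_smul] using (h (-l)).le) x

theorem ContinuousLinearMap.norm_eq_one_of_norm_map {𝕜 E : Type*} [NontriviallyNormedField 𝕜]
    [NormedAddCommGroup E] [NormedSpace 𝕜 E] [Nontrivial E] {U : E →L[𝕜] E}
    (hU : ∀ x, ‖U x‖ = ‖x‖) : ‖U‖ = 1 :=
  LinearIsometry.norm_toContinuousLinearMap ⟨U.toLinearMap, hU⟩

theorem PiLp.norm_rpow_eq_sum {p : ℝ≥0∞} {ι : Type*} [Fintype ι] {β : ι → Type*}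
    [∀ i, SeminormedAddCommGroup (β i)] (hp : 0 < p.toReal) (x : PiLp p β) :
    ‖x‖ ^ p.toReal = ∑ i, ‖x i‖ ^ p.toReal := by
  rw [PiLp.norm_eq_sum hp, one_div, Real.rpow_inv_rpow (by positivity) hp.ne']

section matrixLp

variable {p : ℝ≥0∞} [Fact (1 ≤ p)] {d : ℕ}

theorem matrixLp_apply (M : Matrix (Fin d) (Fin d) ℂ) (x : PiLp p (fun _ : Fin d => ℂ))
    (j : Fin d) : matrixLp p M x j = ∑ k, M j k * x k := rfl

theorem matrixLp_mul (M N : Matrix (Fin d) (Fin d) ℂ) :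
    matrixLp p (M * N) = matrixLp p M * matrixLp p N := by
  ext x j
  simp only [mul_apply_eq_comp, matrixLp_apply, Matrix.mul_apply, Finset.sum_mul,
    Finset.mul_sum, mul_assoc]
  exact Finset.sum_comm

theorem matrixLp_diagonal_apply (v : Fin d → ℂ) (x : PiLp p (fun _ : Fin d => ℂ)) (j : Fin d) :
    matrixLp p (Matrix.diagonal v) x j = v j * x j :=
  Matrix.mulVec_diagonal v x j

theorem norm_rpow_one_add_smul_matrixLp_single (hp : 0 < p.toReal) (M : Matrix (Fin d) (Fin d) ℂ)
    (w : ℂ) (k : Fin d) :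
    ‖(1 + w • matrixLp p M) (PiLp.single p k 1)‖ ^ p.toReal
      = ‖1 + w * M k k‖ ^ p.toReal + ‖w‖ ^ p.toReal * ∑ j ∈ univ.erase k, ‖M j k‖ ^ p.toReal := by
  have hcol : ∀ j, (1 + w • matrixLp p M) (PiLp.single p k 1) j
      = (if j = k then 1 else 0) + w * M j k := by
    intro j
    simp [matrixLp_apply, PiLp.single_apply]
  rw [PiLp.norm_rpow_eq_sum hp, ← add_sum_erase _ _ (mem_univ k), mul_sum]
  congr 1
  · rw [hcol, if_pos rfl]
  · refine sum_congr rfl fun j hj => ?_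
    rw [hcol, if_neg (ne_of_mem_erase hj), zero_add, norm_mul,
      Real.mul_rpow (norm_nonneg _) (norm_nonneg _)]

theorem norm_one_add_smul_matrixLp_diagonal_apply (hp : 0 < p.toReal) {w : ℂ} {v : Fin d → ℂ}
    (hv : ∀ j, ‖1 + w * v j‖ = 1) (x : PiLp p (fun _ : Fin d => ℂ)) :
    ‖(1 + w • matrixLp p (Matrix.diagonal v)) x‖ = ‖x‖ := by
  simp_rw [PiLp.norm_eq_sum hp]
  congr 2 with j
  simp [matrixLp_diagonal_apply, ← mul_assoc, ← one_add_mul, hv]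

end matrixLp

/-- For `p ∈ [1, ∞)`, `p ≠ 2`, an idempotent `e ∈ M_d(ℂ)`, regarded as
an operator on `ℓ^p_d`, is hermitian (`‖exp(iλe)‖ = 1` for all real `λ`) iff `e` is a
diagonal matrix with entries in `{0, 1}`. -/
theorem stmt_12 (p : ℝ≥0∞) [Fact (1 ≤ p)] (hp : p ≠ ⊤) (hp2 : p ≠ 2) (d : ℕ) (hd : 0 < d)
    (e : Matrix (Fin d) (Fin d) ℂ) (he : e * e = e) :
    (∀ l : ℝ, ‖NormedSpace.exp (((l : ℂ) * Complex.I) • matrixLp p e)‖ = 1) ↔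
      (∀ j k : Fin d, (j ≠ k → e j k = 0) ∧ (e j j = 0 ∨ e j j = 1)) := by
  have hp_pos : 0 < p.toReal := ENNReal.toReal_pos (one_pos.trans_le Fact.out).ne' hp
  have hp_ne_two : p.toReal ≠ 2 := fun h => hp2 (by rw [← ENNReal.ofReal_toReal hp, h]; simp)
  have hT : IsIdempotentElem (matrixLp p e) := by rw [IsIdempotentElem, ← matrixLp_mul, he]
  constructor
  · intro hnorm
    have hcol : ∀ k, (e k k = 0 ∨ e k k = 1) ∧ ∑ j ∈ univ.erase k, ‖e j k‖ ^ p.toReal = 0 :=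
      fun k => eq_zero_or_eq_one_of_norm_rpow_add_eq_one hp_pos.ne' hp_ne_two fun l => by
        rw [← norm_rpow_one_add_smul_matrixLp_single hp_pos, ← hT.exp_smul,
          ContinuousLinearMap.norm_exp_smul_apply_eq hnorm, PiLp.norm_single, norm_one,
          Real.one_rpow]
    refine fun j k => ⟨fun hjk => ?_, (hcol j).1⟩
    have hzero := (sum_eq_zero_iff_of_nonneg (fun i _ => by positivity)).mp (hcol k).2 j
      (mem_erase.mpr ⟨hjk, mem_univ j⟩)
    exact norm_eq_zero.mp ((Real.rpow_eq_zero_iff_of_nonneg (norm_nonneg _)).mp hzero).1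
  · intro hdiag l
    have : Nonempty (Fin d) := ⟨⟨0, hd⟩⟩
    have hdiagonal : e = Matrix.diagonal fun j => e j j := by
      ext j k
      by_cases hjk : j = k
      · simp [hjk]
      · simp [hjk, (hdiag j k).1 hjk]
    rw [hT.exp_smul, hdiagonal]
    refine ContinuousLinearMap.norm_eq_one_of_norm_map
      (norm_one_add_smul_matrixLp_diagonal_apply hp_pos fun j => ?_)
    rcases (hdiag j j).2 with h | h <;> simp [h, norm_exp_ofReal_mul_I]
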